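/- arXiv:2402.08014 — 4 statements merged into one kernel-verified Lean document; each statement's English description precedes it below -/
import Mathlib

section
/- (Faithful lift, Case 2: rank formula.) Let k ≥ 1, α : Fin k → ℤ, and let J ⊆ Fin k be nonempty with α_j < 0 for all j ∈ J. Let a := max { α_j : j ∈ J }. Define α' : Option (Fin k) → ℤ by α'(none) = a, α'(some j) = α_j − a for j ∈ J, and α'(some j) = α_j for j ∉ J. Then, writing N(β) for the number of indices where a vector β is negative, N(α') = N(α) + 1 − |{ j ∈ J : α_j = a }|. -/
open Finset

section NegativeEntries

variable {ι G : Type*} [Fintype ι] [AddCommGroup G] [LinearOrder G]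

theorem card_filter_option_neg (f : Option ι → G) :
    #(univ.filter fun o => f o < 0) =
      (if f none < 0 then 1 else 0) + #(univ.filter fun i => f (some i) < 0) := by
  rw [card_filter, Fintype.sum_option, ← card_filter]

/-- On `J` the entries equal to `a` become `0`; those below `a` stay negative. -/
theorem filter_neg_of_sub_max_eq_sdiff [IsOrderedAddMonoid G] [DecidableEq ι]
    {α β : ι → G} {J : Finset ι} {a : G}
    (hneg : ∀ j ∈ J, α j < 0) (hle : ∀ j ∈ J, α j ≤ a)
    (hin : ∀ j ∈ J, β j = α j - a) (hout : ∀ j ∉ J, β j = α j) :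
    univ.filter (fun j => β j < 0) =
      univ.filter (fun j => α j < 0) \ J.filter (fun j => α j = a) := by
  ext j
  simp only [mem_filter, mem_sdiff, mem_univ, true_and, not_and]
  by_cases hj : j ∈ J
  · rw [hin j hj, sub_neg, lt_iff_le_and_ne]
    exact ⟨fun h => ⟨hneg j hj, fun _ => h.2⟩, fun h => ⟨hle j hj, h.2 hj⟩⟩
  · rw [hout j hj]
    exact ⟨fun h => ⟨h, fun h' => absurd h' hj⟩, And.left⟩

theorem filter_eq_subset_filter_neg (α : ι → G) {J : Finset ι} (a : G)
    (hneg : ∀ j ∈ J, α j < 0) :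
    J.filter (fun j => α j = a) ⊆ univ.filter (fun j => α j < 0) := fun j hj =>
  mem_filter.mpr ⟨mem_univ j, hneg j (mem_filter.mp hj).1⟩

end NegativeEntries

theorem faithful_lift_case_two_rank_general (k : ℕ) (α : Fin k → ℤ)
    (J : Finset (Fin k)) (hJ : J.Nonempty)
    (hneg : ∀ j ∈ J, α j < 0)
    (a : ℤ) (ha : a = (J.image α).max' (hJ.image α))
    (α' : Option (Fin k) → ℤ)
    (h0 : α' none = a)
    (h1 : ∀ j ∈ J, α' (some j) = α j - a)
    (h2 : ∀ j ∉ J, α' (some j) = α j) :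
    ((Finset.univ.filter (fun o : Option (Fin k) => α' o < 0)).card : ℤ) =
      ((Finset.univ.filter (fun j : Fin k => α j < 0)).card : ℤ) + 1 -
        ((J.filter (fun j => α j = a)).card : ℤ) := by
  obtain ⟨j₀, hj₀, rfl⟩ := mem_image.mp (ha ▸ max'_mem _ _ : a ∈ J.image α)
  have hle : ∀ j ∈ J, α j ≤ α j₀ := fun j hj => ha ▸ le_max' _ _ (mem_image_of_mem α hj)
  have hsub := filter_eq_subset_filter_neg α (α j₀) hneg
  rw [card_filter_option_neg, h0, if_pos (hneg j₀ hj₀),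
    filter_neg_of_sub_max_eq_sdiff hneg hle h1 h2, card_sdiff_of_subset hsub,
    Nat.cast_add, Nat.cast_sub (card_le_card hsub)]
  push_cast
  ring

/-- Faithful lift, Case 2 (rank formula): if all entries of `α` on `J` are negative and
`a` is their maximum, then the number of negative entries of the faithful lift `α'`
equals `N(α) + 1 − |{j ∈ J : α j = a}|`. -/
theorem faithful_lift_case_two_rank (k : ℕ) (hk : 1 ≤ k) (α : Fin k → ℤ)
    (J : Finset (Fin k)) (hJ : J.Nonempty)
    (hneg : ∀ j ∈ J, α j < 0)
    (a : ℤ) (ha : a = (J.image α).max' (hJ.image α))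
    (α' : Option (Fin k) → ℤ)
    (h0 : α' none = a)
    (h1 : ∀ j ∈ J, α' (some j) = α j - a)
    (h2 : ∀ j ∉ J, α' (some j) = α j) :
    ((Finset.univ.filter (fun o : Option (Fin k) => α' o < 0)).card : ℤ) =
      ((Finset.univ.filter (fun j : Fin k => α j < 0)).card : ℤ) + 1 -
        ((J.filter (fun j => α j = a)).card : ℤ) :=
  faithful_lift_case_two_rank_general k α J hJ hneg a ha α' h0 h1 h2
end

section
/- (Faithful lift, Case 2: rank bounds.) With the notation of the previous statement (α_j < 0 for all j ∈ J nonempty, a = max_{j ∈ J} α_j, α' the faithful lift), writing N for the number of strictly negative entries, one has 1 ≤ N(α') ≤ N(α). -/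
/-- Faithful lift, Case 2 (rank bounds): with all entries of `α` on `J` negative and
`a` their maximum, the faithful lift `α'` satisfies `1 ≤ N(α') ≤ N(α)`. -/
theorem faithful_lift_case_two_bounds (k : ℕ) (hk : 1 ≤ k) (α : Fin k → ℤ)
    (J : Finset (Fin k)) (hJ : J.Nonempty)
    (hneg : ∀ j ∈ J, α j < 0)
    (a : ℤ) (ha : a = (J.image α).max' (hJ.image α))
    (α' : Option (Fin k) → ℤ)
    (h0 : α' none = a)
    (h1 : ∀ j ∈ J, α' (some j) = α j - a)
    (h2 : ∀ j ∉ J, α' (some j) = α j) :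
    1 ≤ (Finset.univ.filter (fun o : Option (Fin k) => α' o < 0)).card ∧
    (Finset.univ.filter (fun o : Option (Fin k) => α' o < 0)).card ≤
      (Finset.univ.filter (fun j : Fin k => α j < 0)).card := by
  obtain ⟨j₀, hj₀J, hj₀⟩ : ∃ j ∈ J, α j = a := by
    have h := (J.image α).max'_mem (hJ.image α)
    rw [← ha] at h
    simpa [Finset.mem_image] using h
  have ha0 : a < 0 := hj₀ ▸ hneg j₀ hj₀J
  have hle : ∀ j ∈ J, α j ≤ a := by
    intro j hj
    rw [ha]
    exact Finset.le_max' _ _ (Finset.mem_image_of_mem α hj)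
  constructor
  · rw [Nat.one_le_iff_ne_zero, ← Nat.pos_iff_ne_zero, Finset.card_pos]
    exact ⟨none, by simpa [h0] using ha0⟩
  · apply Finset.card_le_card_of_injOn (fun o => o.getD j₀)
    · intro o ho
      simp only [Finset.mem_coe, Finset.mem_filter, Finset.mem_univ, true_and] at ho ⊢
      match o with
      | none => simpa [hj₀] using ha0
      | some j =>
        by_cases hj : j ∈ J
        · exact hneg j hj
        · rw [h2 j hj] at ho; exact ho
    · intro x hx y hy hxy
      simp only [Finset.mem_coe, Finset.mem_filter, Finset.mem_univ, true_and] at hx hy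
      have key : ∀ o : Option (Fin k), α' o < 0 → o.getD j₀ = j₀ → o = none := by
        intro o ho hgd
        cases o with
        | none => rfl
        | some j =>
          simp only [Option.getD_some] at hgd
          rw [hgd, h1 j₀ hj₀J, hj₀] at ho
          omega
      cases x with
      | none =>
        cases y with
        | none => rfl
        | some j =>
          have hj : j = j₀ := by simpa using hxy.symm
          exact absurd (key _ hy (by simp [hj])) (by simp)
      | some j =>
        cases y with
        | none =>
          have hj : j = j₀ := by simpa using hxy
          exact absurd (key _ hx (by simp [hj])) (by simp)
        | some j' => simpa using hxy
end

section
/- (Puncturing multiplicity under faithful lift.) Let α : Fin k → ℤ and let J ⊆ Fin k be nonempty with α_j < 0 for all j ∈ J; set a := max_{j ∈ J} α_j and define α' : Option (Fin k) → ℤ by α'(none) = a, α'(some j) = α_j − a for j ∈ J, α'(some j) = α_j otherwise. Define the puncturing multiplicity m(β) := Σ over indices i with β_i < 0 of (−β_i). Then m(α') = m(α) + (|J| − 1)·a; in particular if |J| ≥ 2 then m(α') < m(α). -/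
/-!
With `β⁻ = max (-β) 0` the multiplicity is `∑ i, (β i)⁻`. Since `α j ≤ a < 0` on `J`, each shifted
entry `α j - a` is still nonpositive, so its negative part is that of `α j` lowered by `-a`; the new
coordinate contributes `a⁻ = -a`. The total therefore changes by `|J| • a - a`, which is negative
as soon as `|J| ≥ 2`.
-/

open Finset

variable {ι G : Type*} [AddCommGroup G] [LinearOrder G] [IsOrderedAddMonoid G]

theorem Finset.sum_filter_neg_eq_sum_negPart [Fintype ι] (f : ι → G) :
    ∑ i ∈ univ.filter (fun i => f i < 0), -f i = ∑ i, (f i)⁻ := by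
  rw [sum_filter]
  refine sum_congr rfl fun i _ => ?_
  split_ifs with h
  · exact (negPart_of_nonpos h.le).symm
  · exact (negPart_eq_zero.mpr (not_lt.mp h)).symm

theorem negPart_sub_of_le_of_nonpos {a b : G} (hba : b ≤ a) (ha : a ≤ 0) :
    (b - a)⁻ = b⁻ + a := by
  rw [negPart_of_nonpos (sub_nonpos.mpr hba), negPart_of_nonpos (hba.trans ha)]
  abel

theorem sum_negPart_faithfulLift [Fintype ι] [DecidableEq ι] (f : ι → G) (J : Finset ι) {a : G}
    (ha : a ≤ 0) (hle : ∀ j ∈ J, f j ≤ a) (f' : Option ι → G) (h0 : f' none = a)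
    (h1 : ∀ j ∈ J, f' (some j) = f j - a) (h2 : ∀ j ∉ J, f' (some j) = f j) :
    ∑ o, (f' o)⁻ + a = ∑ i, (f i)⁻ + #J • a := by
  have hJ : ∑ j ∈ J, (f' (some j))⁻ = ∑ j ∈ J, (f j)⁻ + #J • a := by
    rw [← sum_const, ← sum_add_distrib]
    exact sum_congr rfl fun j hj => by rw [h1 j hj, negPart_sub_of_le_of_nonpos (hle j hj) ha]
  have hJc : ∑ j ∈ Jᶜ, (f' (some j))⁻ = ∑ j ∈ Jᶜ, (f j)⁻ :=
    sum_congr rfl fun j hj => by rw [h2 j (mem_compl.mp hj)]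
  rw [Fintype.sum_option, h0, negPart_of_nonpos ha, ← sum_add_sum_compl J, hJ, hJc,
    ← sum_add_sum_compl J (fun i => (f i)⁻)]
  abel

/-- Puncturing multiplicity under faithful lift: `m(α') = m(α) + (|J| − 1)·a`, and if
`|J| ≥ 2` then `m(α') < m(α)`. -/
theorem faithful_lift_multiplicity (k : ℕ) (α : Fin k → ℤ)
    (J : Finset (Fin k)) (hJ : J.Nonempty)
    (hneg : ∀ j ∈ J, α j < 0)
    (a : ℤ) (ha : a = (J.image α).max' (hJ.image α))
    (α' : Option (Fin k) → ℤ)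
    (h0 : α' none = a)
    (h1 : ∀ j ∈ J, α' (some j) = α j - a)
    (h2 : ∀ j ∉ J, α' (some j) = α j) :
    (∑ o ∈ Finset.univ.filter (fun o : Option (Fin k) => α' o < 0), (-(α' o))) =
      (∑ j ∈ Finset.univ.filter (fun j : Fin k => α j < 0), (-(α j))) +
        ((J.card : ℤ) - 1) * a ∧
    (2 ≤ J.card →
      (∑ o ∈ Finset.univ.filter (fun o : Option (Fin k) => α' o < 0), (-(α' o))) <
        (∑ j ∈ Finset.univ.filter (fun j : Fin k => α j < 0), (-(α j)))) := by
  have hle : ∀ j ∈ J, α j ≤ a := fun j hj => ha ▸ le_max' _ _ (mem_image_of_mem α hj)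
  have ha_neg : a < 0 := ha ▸ (max'_lt_iff _ _).mpr (forall_mem_image.mpr hneg)
  have key := sum_negPart_faithfulLift α J ha_neg.le hle α' h0 h1 h2
  rw [nsmul_eq_mul] at key
  rw [sum_filter_neg_eq_sum_negPart, sum_filter_neg_eq_sum_negPart]
  refine ⟨by linarith, fun hcard => ?_⟩
  have hcard' : (2 : ℤ) ≤ #J := by exact_mod_cast hcard
  nlinarith
end

section
/- (Termination of the rank-reduction process.) Define a step on integer-valued lists as follows: given a list L of integers with at least two strictly negative entries, let a be the maximum of the negative entries of L; replace every negative entry x of L by x − a, leave the other entries unchanged, and append a to the list. Then for any list L₀ of integers with at least one strictly negative entry, any sequence of such steps starting from L₀ terminates after at most m(L₀) steps in a list with exactly one strictly negative entry, where m(L) denotes the sum of the absolute values of the negative entries of L. Moreover every list in the sequence has at least one negative entry. -/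
/-- Number of strictly negative entries of a list of integers. -/
def negCount (L : List ℤ) : ℕ := (L.filter (fun x => x < 0)).length

/-- Puncturing multiplicity: the sum of the absolute values of the negative entries. -/
def pmult (L : List ℤ) : ℤ := ((L.filter (fun x => x < 0)).map (fun x => -x)).sum

/-- One step of the rank-reduction process: `L` has at least two strictly negative
entries, `a` is the maximum of the negative entries of `L`, every negative entry `x`
is replaced by `x − a`, the other entries are unchanged, and `a` is appended. -/
def RankStep (L L' : List ℤ) : Prop :=
  ∃ a : ℤ, 2 ≤ negCount L ∧ a ∈ L ∧ a < 0 ∧ (∀ x ∈ L, x < 0 → x ≤ a) ∧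
    L' = L.map (fun x => if x < 0 then x - a else x) ++ [a]

/-!
If `a` is the largest negative entry, a step raises each of the `k ≥ 2` negative entries by `|a|`
(those equal to `a` become `0`) and appends `a`, so the multiplicity changes from `m` to
`m + (k - 1) a < m`. The appended `a` keeps some entry negative, hence `m ≥ 1` all along, which
bounds the number of steps; and while two entries are negative a step is available.
-/

lemma negCount_cons (x : ℤ) (L : List ℤ) :
    negCount (x :: L) = (if x < 0 then 1 else 0) + negCount L := by
  simp only [negCount, List.filter_cons, decide_eq_true_eq]
  split <;> simp [Nat.add_comm]

lemma pmult_cons (x : ℤ) (L : List ℤ) :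
    pmult (x :: L) = (if x < 0 then -x else 0) + pmult L := by
  simp only [pmult, List.filter_cons, decide_eq_true_eq]
  split <;> simp

lemma negCount_append (A B : List ℤ) : negCount (A ++ B) = negCount A + negCount B := by
  simp [negCount, List.filter_append]

lemma pmult_append (A B : List ℤ) : pmult (A ++ B) = pmult A + pmult B := by
  simp [pmult, List.filter_append]

lemma negCount_le_pmult (L : List ℤ) : (negCount L : ℤ) ≤ pmult L := by
  induction L with
  | nil => simp [negCount, pmult]
  | cons x L ih =>
    rw [negCount_cons, pmult_cons]
    split <;> push_cast <;> omega

/-- Entries equal to `a` contribute `-a` before and `0` after; every other negative entry stays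
negative and contributes `a` less. -/
lemma pmult_map_sub_of_le {a : ℤ} (L : List ℤ) (hmax : ∀ x ∈ L, x < 0 → x ≤ a) :
    pmult (L.map fun x => if x < 0 then x - a else x) = pmult L + a * negCount L := by
  induction L with
  | nil => simp [negCount, pmult]
  | cons x L ih =>
    rw [List.map_cons, pmult_cons, pmult_cons, negCount_cons,
      ih fun y hy => hmax y (List.mem_cons_of_mem x hy)]
    by_cases hx : x < 0
    · have hxa := hmax x List.mem_cons_self hx
      simp only [if_pos hx]
      split <;> push_cast <;> nlinarith
    · simp only [if_neg hx]
      push_cast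
      ring

namespace RankStep

variable {L L' : List ℤ}

lemma pmult_eq (h : RankStep L L') :
    ∃ a < 0, 2 ≤ negCount L ∧ pmult L' = pmult L + (negCount L - 1) * a := by
  obtain ⟨a, hcount, -, ha, hmax, rfl⟩ := h
  refine ⟨a, ha, hcount, ?_⟩
  rw [pmult_append, pmult_map_sub_of_le L hmax, pmult_cons, if_pos ha, show pmult [] = 0 from rfl]
  ring

lemma pmult_lt (h : RankStep L L') : pmult L' < pmult L := by
  obtain ⟨a, ha, hcount, heq⟩ := h.pmult_eq
  have : (2 : ℤ) ≤ negCount L := by exact_mod_cast hcount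
  nlinarith

lemma one_le_negCount (h : RankStep L L') : 1 ≤ negCount L' := by
  obtain ⟨a, -, -, ha, -, rfl⟩ := h
  rw [negCount_append, negCount_cons, if_pos ha]
  omega

end RankStep

lemma exists_rankStep_of_two_le_negCount {L : List ℤ} (h : 2 ≤ negCount L) :
    ∃ L', RankStep L L' := by
  set N := L.filter fun x => x < 0
  have hN : N ≠ [] := by
    rintro hnil
    simp [negCount, N, hnil] at h
  obtain ⟨a, ha⟩ := Option.ne_none_iff_exists'.mp (List.maximum_ne_bot_of_ne_nil hN)
  obtain ⟨haL, ha0⟩ : a ∈ L ∧ a < 0 := by simpa [N] using List.maximum_mem ha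
  refine ⟨_, a, h, haL, ha0, fun x hx hx0 => List.le_maximum_of_mem ?_ ha, rfl⟩
  simpa [N] using And.intro hx hx0

lemma natCast_le_sub_of_forall_succ_lt {f : ℕ → ℤ} {n : ℕ} (h : ∀ i < n, f (i + 1) < f i) :
    ∀ i ≤ n, (i : ℤ) ≤ f 0 - f i := by
  intro i hi
  induction i with
  | zero => simp
  | succ k ih =>
    have hstep := h k (by omega)
    have hk := ih (by omega)
    push_cast
    omega

/-- Termination of the rank-reduction process: starting from a list with at least one
strictly negative entry, any sequence of rank-reduction steps has length at most the
puncturing multiplicity of the initial list, every list in the sequence has at least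
one negative entry, and if no further step is possible then the final list has exactly
one strictly negative entry. -/
theorem rank_reduction_terminates (L : ℕ → List ℤ) (h0 : 1 ≤ negCount (L 0))
    (n : ℕ) (hstep : ∀ i < n, RankStep (L i) (L (i + 1))) :
    (n : ℤ) ≤ pmult (L 0) ∧
    (∀ i ≤ n, 1 ≤ negCount (L i)) ∧
    ((∀ L', ¬ RankStep (L n) L') → negCount (L n) = 1) := by
  have hneg : ∀ i ≤ n, 1 ≤ negCount (L i) := by
    rintro (_ | i) hi
    · exact h0
    · exact (hstep i hi).one_le_negCount
  refine ⟨?_, hneg, fun hstuck => ?_⟩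
  · have hdesc := natCast_le_sub_of_forall_succ_lt (fun i hi => (hstep i hi).pmult_lt) n le_rfl
    have hpos := negCount_le_pmult (L n)
    omega
  · by_contra hne
    have htwo : 2 ≤ negCount (L n) := by have := hneg n le_rfl; omega
    obtain ⟨L', hL'⟩ := exists_rankStep_of_two_le_negCount htwo
    exact hstuck L' hL'
end
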